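/- arXiv:2108.05197 — 3 statements merged into one kernel-verified Lean document; each statement's English description precedes it below -/
import Mathlib

section
/- (Cohomological form of Hitchin's type A/type B dichotomy.) Let φ = (a, x, c) ∈ W_ℂ satisfy ⟨φ,φ⟩ = 0 and ⟨φ,φ̄⟩ > 0. (1) If a ≠ 0, then φ = a·e^{B+iω} where B = Re(x/a) and ω = Im(x/a), and moreover b(ω,ω) > 0. (2) If a = 0 and b is nondegenerate, then b(x,x) = 0, b(x,x̄) > 0, and there exists B ∈ V with c = b(B, x); that is, φ = (0, x, b(B,x)) is the B-field transform of (0, x, 0). -/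
noncomputable section

/-- ℂ-bilinear extension of `b` to `V_ℂ = V × V` (a pair `(x, y)` represents `x + i y`). -/
def bC {V : Type*} [AddCommGroup V] [Module ℝ V]
    (b : V →ₗ[ℝ] V →ₗ[ℝ] ℝ) (φ ψ : V × V) : ℂ :=
  ⟨b φ.1 ψ.1 - b φ.2 ψ.2, b φ.1 ψ.2 + b φ.2 ψ.1⟩

/-- Complex conjugation on `V_ℂ = V × V`. -/
def conjV {V : Type*} [AddCommGroup V] [Module ℝ V] (φ : V × V) : V × V :=
  (φ.1, -φ.2)

/-- The ℂ-bilinear Mukai pairing on `W_ℂ = ℂ × V_ℂ × ℂ`. -/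
def mukaiC {V : Type*} [AddCommGroup V] [Module ℝ V]
    (b : V →ₗ[ℝ] V →ₗ[ℝ] ℝ) (w w' : ℂ × (V × V) × ℂ) : ℂ :=
  bC b w.2.1 w'.2.1 - w.1 * w'.2.2 - w.2.2 * w'.1

/-- Complex conjugation on `W_ℂ = ℂ × V_ℂ × ℂ`. -/
def conjW {V : Type*} [AddCommGroup V] [Module ℝ V]
    (w : ℂ × (V × V) × ℂ) : ℂ × (V × V) × ℂ :=
  ((starRingEnd ℂ) w.1, conjV w.2.1, (starRingEnd ℂ) w.2.2)

/-- Scalar multiplication by `λ ∈ ℂ` on `V_ℂ = V × V`. -/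
def csmul {V : Type*} [AddCommGroup V] [Module ℝ V] (lam : ℂ) (x : V × V) : V × V :=
  (lam.re • x.1 - lam.im • x.2, lam.re • x.2 + lam.im • x.1)

/-- Scalar multiplication by `λ ∈ ℂ` on `W_ℂ = ℂ × V_ℂ × ℂ`. -/
def smulW {V : Type*} [AddCommGroup V] [Module ℝ V]
    (lam : ℂ) (w : ℂ × (V × V) × ℂ) : ℂ × (V × V) × ℂ :=
  (lam * w.1, csmul lam w.2.1, lam * w.2.2)

/-- `e^{B+iω} = (1, B+iω, ½(b(B,B)−b(ω,ω)) + i·b(B,ω)) ∈ W_ℂ` for `B, ω ∈ V`. -/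
def expB {V : Type*} [AddCommGroup V] [Module ℝ V]
    (b : V →ₗ[ℝ] V →ₗ[ℝ] ℝ) (B ω : V) : ℂ × (V × V) × ℂ :=
  (1, (B, ω), ⟨(b B B - b ω ω) / 2, b B ω⟩)

/-!
Cohomological form of Hitchin's type A / type B dichotomy.
Let `φ = (a, x, c) ∈ W_ℂ` satisfy `⟨φ,φ⟩ = 0` and `⟨φ,φ̄⟩ > 0`.
(1) If `a ≠ 0`, then `φ = a·e^{B+iω}` with `B = Re(x/a)`, `ω = Im(x/a)`, and `b(ω,ω) > 0`.
(2) If `a = 0` and `b` is nondegenerate, then `b(x,x) = 0`, `b(x,x̄) > 0`, and there is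
`B ∈ V` with `c = b(B,x)`.
-/


private lemma csmul_csmul' {V : Type*} [AddCommGroup V] [Module ℝ V]
    (l m : ℂ) (x : V × V) : csmul l (csmul m x) = csmul (l * m) x := by
  refine Prod.ext ?_ ?_ <;>
    · simp only [csmul, Complex.mul_re, Complex.mul_im]
      module

private lemma csmul_one' {V : Type*} [AddCommGroup V] [Module ℝ V]
    (x : V × V) : csmul 1 x = x := by
  simp [csmul]

private lemma bC_csmul_left {V : Type*} [AddCommGroup V] [Module ℝ V]
    (b : V →ₗ[ℝ] V →ₗ[ℝ] ℝ) (l : ℂ) (x y : V × V) :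
    bC b (csmul l x) y = l * bC b x y := by
  apply Complex.ext <;>
    · simp [bC, csmul, Complex.mul_re, Complex.mul_im]
      ring

private lemma bC_csmul_right {V : Type*} [AddCommGroup V] [Module ℝ V]
    (b : V →ₗ[ℝ] V →ₗ[ℝ] ℝ) (l : ℂ) (x y : V × V) :
    bC b x (csmul l y) = l * bC b x y := by
  apply Complex.ext <;>
    · simp [bC, csmul, Complex.mul_re, Complex.mul_im]
      ring

private lemma mukai_smul_exp_conj {V : Type*} [AddCommGroup V] [Module ℝ V]
    (b : V →ₗ[ℝ] V →ₗ[ℝ] ℝ) (hsymm : ∀ x y : V, b x y = b y x) (a : ℂ) (B ω : V) :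
    (mukaiC b (smulW a (expB b B ω)) (conjW (smulW a (expB b B ω)))).re
      = (a.re ^ 2 + a.im ^ 2) * (2 * b ω ω) := by
  have h1 := hsymm ω B
  simp [mukaiC, smulW, expB, conjW, conjV, csmul, bC, Complex.mul_re, Complex.mul_im, h1]
  ring

theorem typeA_typeB_dichotomy
    {V : Type*} [AddCommGroup V] [Module ℝ V] [FiniteDimensional ℝ V]
    (b : V →ₗ[ℝ] V →ₗ[ℝ] ℝ) (hsymm : ∀ x y : V, b x y = b y x)
    (a : ℂ) (x : V × V) (c : ℂ)
    (h0 : mukaiC b (a, x, c) (a, x, c) = 0)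
    (hpos : 0 < (mukaiC b (a, x, c) (conjW (a, x, c))).re) :
    (a ≠ 0 →
      (a, x, c) = smulW a (expB b (csmul a⁻¹ x).1 (csmul a⁻¹ x).2) ∧
      0 < b (csmul a⁻¹ x).2 (csmul a⁻¹ x).2) ∧
    (a = 0 → (∀ y : V, (∀ z : V, b y z = 0) → y = 0) →
      bC b x x = 0 ∧
      0 < (bC b x (conjV x)).re ∧ (bC b x (conjV x)).im = 0 ∧
      ∃ B : V, c = bC b (B, (0 : V)) x) := by
  obtain ⟨x1, x2⟩ := x
  have h21 : b x2 x1 = b x1 x2 := hsymm x2 x1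
  simp only [mukaiC] at h0
  constructor
  · intro ha
    have hbCxx : bC b (x1, x2) (x1, x2) = 2 * a * c := by linear_combination h0
    have hx : csmul a (csmul a⁻¹ ((x1 : V), x2)) = (x1, x2) := by
      rw [csmul_csmul', mul_inv_cancel₀ ha, csmul_one']
    have hbCy : bC b (csmul a⁻¹ ((x1 : V), x2)) (csmul a⁻¹ ((x1 : V), x2))
        = a⁻¹ * (a⁻¹ * (2 * a * c)) := by
      rw [bC_csmul_left, bC_csmul_right, hbCxx]
    have h2 : (2 : ℂ) * ⟨(b (csmul a⁻¹ ((x1 : V), x2)).1 (csmul a⁻¹ ((x1 : V), x2)).1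
          - b (csmul a⁻¹ ((x1 : V), x2)).2 (csmul a⁻¹ ((x1 : V), x2)).2) / 2,
          b (csmul a⁻¹ ((x1 : V), x2)).1 (csmul a⁻¹ ((x1 : V), x2)).2⟩
        = bC b (csmul a⁻¹ ((x1 : V), x2)) (csmul a⁻¹ ((x1 : V), x2)) := by
      simp [bC, Complex.ext_iff, Complex.mul_re, Complex.mul_im,
        hsymm (csmul a⁻¹ ((x1 : V), x2)).2 (csmul a⁻¹ ((x1 : V), x2)).1]
      constructor <;> ring
    have hc : a * (⟨(b (csmul a⁻¹ ((x1 : V), x2)).1 (csmul a⁻¹ ((x1 : V), x2)).1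
          - b (csmul a⁻¹ ((x1 : V), x2)).2 (csmul a⁻¹ ((x1 : V), x2)).2) / 2,
          b (csmul a⁻¹ ((x1 : V), x2)).1 (csmul a⁻¹ ((x1 : V), x2)).2⟩ : ℂ) = c := by
      have h3 : (2 : ℂ) * (a * ⟨(b (csmul a⁻¹ ((x1 : V), x2)).1 (csmul a⁻¹ ((x1 : V), x2)).1
          - b (csmul a⁻¹ ((x1 : V), x2)).2 (csmul a⁻¹ ((x1 : V), x2)).2) / 2,
          b (csmul a⁻¹ ((x1 : V), x2)).1 (csmul a⁻¹ ((x1 : V), x2)).2⟩) = 2 * c := by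
        rw [mul_left_comm, h2, hbCy]
        field_simp
      exact mul_left_cancel₀ two_ne_zero h3
    have heq : ((a : ℂ), ((x1 : V), x2), c)
        = smulW a (expB b (csmul a⁻¹ ((x1 : V), x2)).1 (csmul a⁻¹ ((x1 : V), x2)).2) := by
      refine Prod.ext ?_ (Prod.ext ?_ ?_)
      · exact (mul_one a).symm
      · exact hx.symm
      · exact hc.symm
    refine ⟨heq, ?_⟩
    rw [heq, mukai_smul_exp_conj b hsymm] at hpos
    have hre : a.re ≠ 0 ∨ a.im ≠ 0 := by
      by_contra h
      push_neg at h
      exact ha (Complex.ext h.1 h.2)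
    have hna : 0 < a.re ^ 2 + a.im ^ 2 := by
      rcases hre with h | h <;> positivity
    nlinarith [hpos, hna]
  · intro ha _
    subst ha
    simp only [zero_mul, mul_zero, sub_zero] at h0
    have hpos' : 0 < (bC b ((x1 : V), x2) (conjV ((x1 : V), x2))).re := by
      simpa [mukaiC, conjW] using hpos
    have h0re : b x1 x1 - b x2 x2 = 0 := by
      have := congrArg Complex.re h0
      simpa [bC] using this
    have h0im : b x1 x2 + b x2 x1 = 0 := by
      have := congrArg Complex.im h0
      simpa [bC] using this
    have hre : 0 < b x1 x1 + b x2 x2 := by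
      have := hpos'
      simp [bC, conjV] at this
      linarith
    have him : (bC b ((x1 : V), x2) (conjV ((x1 : V), x2))).im = 0 := by
      simp [bC, conjV]
      linarith [h21]
    have hb12 : b x1 x2 = 0 := by linarith
    have hb11 : 0 < b x1 x1 := by linarith
    have hb22 : 0 < b x2 x2 := by linarith
    refine ⟨h0, hpos', him, (c.re / b x1 x1) • x1 + (c.im / b x2 x2) • x2, ?_⟩
    apply Complex.ext <;>
      · simp [bC, hb12, h21]
        field_simp
end
end

section
/- Let λ, λ' ∈ ℂ be nonzero and ω, ω', B' ∈ V with b(ω,ω) > 0 and b(ω',ω') > 0. Set φ = λ·e^{iω} (i.e., e^{B+iω} with B = 0) and φ' = λ'·e^{B'+iω'} in W_ℂ. Then the planes P_φ and P_{φ'} are pointwise orthogonal with respect to the Mukai pairing and ⟨φ,φ̄⟩ = ⟨φ',φ̄'⟩ if and only if b(ω,ω') = 0, b(ω,B') = 0, b(ω',B') = 0, b(B',B') = b(ω,ω) + b(ω',ω'), and |λ|²·b(ω,ω) = |λ'|²·b(ω',ω'). -/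
noncomputable section

/-- The Mukai pairing on `W = ℝ × V × ℝ`. -/
def mukai {V : Type*} [AddCommGroup V] [Module ℝ V]
    (b : V →ₗ[ℝ] V →ₗ[ℝ] ℝ) (w w' : ℝ × V × ℝ) : ℝ :=
  b w.2.1 w'.2.1 - w.1 * w'.2.2 - w.2.2 * w'.1

/-- The real part of `ψ ∈ W_ℂ`, an element of `W = ℝ × V × ℝ`. -/
def ReW {V : Type*} [AddCommGroup V] [Module ℝ V]
    (w : ℂ × (V × V) × ℂ) : ℝ × V × ℝ :=
  (w.1.re, w.2.1.1, w.2.2.re)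

/-- The imaginary part of `ψ ∈ W_ℂ`, an element of `W = ℝ × V × ℝ`. -/
def ImW {V : Type*} [AddCommGroup V] [Module ℝ V]
    (w : ℂ × (V × V) × ℂ) : ℝ × V × ℝ :=
  (w.1.im, w.2.1.2, w.2.2.im)

/-- The real plane `P_ψ = ℝ·Re ψ + ℝ·Im ψ ⊆ W` of `ψ ∈ W_ℂ`. -/
def PW {V : Type*} [AddCommGroup V] [Module ℝ V]
    (w : ℂ × (V × V) × ℂ) : Submodule ℝ (ℝ × V × ℝ) :=
  Submodule.span ℝ {ReW w, ImW w}

/-- `P_ψ` and `P_{ψ'}` are pointwise orthogonal for the Mukai pairing. -/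
def PointwiseOrth {V : Type*} [AddCommGroup V] [Module ℝ V]
    (b : V →ₗ[ℝ] V →ₗ[ℝ] ℝ) (w w' : ℂ × (V × V) × ℂ) : Prop :=
  ∀ u ∈ PW w, ∀ v ∈ PW w', mukai b u v = 0

/-!
For `x, y ∈ V_ℂ` one has `⟨e^x, e^y⟩ = -½ b(x - y, x - y)`, and `P_ψ, P_ψ'` are pointwise
orthogonal exactly when both `⟨ψ, ψ'⟩` and `⟨ψ, ψ̄'⟩` vanish. With `x = iω`, `y = B' + iω'` and
`ψ̄' = λ̄' e^{B' - iω'}`, orthogonality therefore says `b(x - y, x - y) = b(x - ȳ, x - ȳ) = 0`,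
i.e. `b(B', B') = b(ω ∓ ω', ω ∓ ω')` and `b(B', ω ∓ ω') = 0`, which is the list of conditions
on `ω, ω', B'`. Finally `⟨λ e^{B+iω}, λ̄ e^{B-iω}⟩ = 2|λ|² b(ω, ω)`.
-/

section

variable {V : Type*} [AddCommGroup V] [Module ℝ V] (b : V →ₗ[ℝ] V →ₗ[ℝ] ℝ)

lemma mukai_smul_add_smul_left (x y : ℝ) (u v w : ℝ × V × ℝ) :
    mukai b (x • u + y • v) w = x * mukai b u w + y * mukai b v w := by
  simp only [mukai, Prod.fst_add, Prod.snd_add, Prod.smul_fst, Prod.smul_snd, map_add,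
    map_smul, LinearMap.add_apply, LinearMap.smul_apply, smul_eq_mul]
  ring

lemma mukai_smul_add_smul_right (x y : ℝ) (u v w : ℝ × V × ℝ) :
    mukai b w (x • u + y • v) = x * mukai b w u + y * mukai b w v := by
  simp only [mukai, Prod.fst_add, Prod.snd_add, Prod.smul_fst, Prod.smul_snd, map_add,
    map_smul, smul_eq_mul]
  ring

lemma mukai_neg_right (u v : ℝ × V × ℝ) : mukai b u (-v) = -mukai b u v := by
  simp only [mukai, Prod.fst_neg, Prod.snd_neg, map_neg]
  ring

lemma pointwiseOrth_iff_mukai_reW_imW (w w' : ℂ × (V × V) × ℂ) :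
    PointwiseOrth b w w' ↔
      mukai b (ReW w) (ReW w') = 0 ∧ mukai b (ReW w) (ImW w') = 0 ∧
        mukai b (ImW w) (ReW w') = 0 ∧ mukai b (ImW w) (ImW w') = 0 := by
  have hRe (w : ℂ × (V × V) × ℂ) : ReW w ∈ PW w := Submodule.subset_span (by simp)
  have hIm (w : ℂ × (V × V) × ℂ) : ImW w ∈ PW w := Submodule.subset_span (by simp)
  refine ⟨fun h ↦ ⟨h _ (hRe w) _ (hRe w'), h _ (hRe w) _ (hIm w'), h _ (hIm w) _ (hRe w'),
    h _ (hIm w) _ (hIm w')⟩, ?_⟩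
  rintro ⟨hRR, hRI, hIR, hII⟩ u hu v hv
  obtain ⟨x, y, rfl⟩ := Submodule.mem_span_pair.mp hu
  obtain ⟨x', y', rfl⟩ := Submodule.mem_span_pair.mp hv
  simp only [mukai_smul_add_smul_left, mukai_smul_add_smul_right, hRR, hRI, hIR, hII]
  ring

lemma re_mukaiC (w w' : ℂ × (V × V) × ℂ) :
    (mukaiC b w w').re = mukai b (ReW w) (ReW w') - mukai b (ImW w) (ImW w') := by
  simp only [mukaiC, mukai, bC, ReW, ImW, Complex.sub_re, Complex.mul_re]
  ring

lemma im_mukaiC (w w' : ℂ × (V × V) × ℂ) :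
    (mukaiC b w w').im = mukai b (ReW w) (ImW w') + mukai b (ImW w) (ReW w') := by
  simp only [mukaiC, mukai, bC, ReW, ImW, Complex.sub_im, Complex.mul_im]
  ring

lemma reW_conjW (w : ℂ × (V × V) × ℂ) : ReW (conjW w) = ReW w := by
  simp [ReW, conjW, conjV]

lemma imW_conjW (w : ℂ × (V × V) × ℂ) : ImW (conjW w) = -ImW w := by
  simp [ImW, conjW, conjV]

lemma pointwiseOrth_iff_mukaiC (w w' : ℂ × (V × V) × ℂ) :
    PointwiseOrth b w w' ↔ mukaiC b w w' = 0 ∧ mukaiC b w (conjW w') = 0 := by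
  simp only [pointwiseOrth_iff_mukai_reW_imW, Complex.ext_iff, re_mukaiC, im_mukaiC,
    reW_conjW, imW_conjW, mukai_neg_right, Complex.zero_re, Complex.zero_im]
  constructor
  · rintro ⟨hRR, hRI, hIR, hII⟩
    simp [hRR, hRI, hIR, hII]
  · rintro ⟨⟨h₁, h₂⟩, h₃, h₄⟩
    refine ⟨?_, ?_, ?_, ?_⟩ <;> linarith

lemma bC_csmul_csmul (lam lam' : ℂ) (x y : V × V) :
    bC b (csmul lam x) (csmul lam' y) = lam * lam' * bC b x y := by
  apply Complex.ext <;>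
  · simp only [bC, csmul, map_add, map_sub, map_smul, LinearMap.add_apply, LinearMap.sub_apply,
      LinearMap.smul_apply, smul_eq_mul, Complex.mul_re, Complex.mul_im]
    ring

lemma mukaiC_smulW_smulW (lam lam' : ℂ) (w w' : ℂ × (V × V) × ℂ) :
    mukaiC b (smulW lam w) (smulW lam' w') = lam * lam' * mukaiC b w w' := by
  simp only [mukaiC, smulW, bC_csmul_csmul]
  ring

lemma conjW_smulW (lam : ℂ) (w : ℂ × (V × V) × ℂ) :
    conjW (smulW lam w) = smulW (starRingEnd ℂ lam) (conjW w) := by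
  simp only [conjW, smulW, conjV, csmul, map_mul, Complex.conj_re, Complex.conj_im, neg_smul,
    smul_neg, neg_neg, neg_add]

lemma conjW_expB (B ω : V) : conjW (expB b B ω) = expB b B (-ω) := by
  simp [conjW, expB, conjV, Complex.ext_iff]

lemma bC_self (hsymm : ∀ x y : V, b x y = b y x) (x y : V) :
    bC b (x, y) (x, y) = ⟨b x x - b y y, 2 * b x y⟩ := by
  simp only [bC, hsymm y x]
  ring_nf

lemma bC_self_eq_zero_iff (hsymm : ∀ x y : V, b x y = b y x) (x y : V) :
    bC b (x, y) (x, y) = 0 ↔ b x x = b y y ∧ b x y = 0 := by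
  simp only [bC_self b hsymm, Complex.ext_iff, Complex.zero_re, Complex.zero_im, sub_eq_zero,
    mul_eq_zero, two_ne_zero, false_or]

lemma mukaiC_expB_expB (hsymm : ∀ x y : V, b x y = b y x) (B ω B' ω' : V) :
    mukaiC b (expB b B ω) (expB b B' ω') = -(1 / 2) * bC b (B - B', ω - ω') (B - B', ω - ω') := by
  rw [bC_self b hsymm]
  apply Complex.ext <;>
  · simp only [mukaiC, bC, expB, map_sub, LinearMap.sub_apply, hsymm B' B, hsymm ω' ω,
      hsymm B' ω, Complex.mul_re, Complex.mul_im, Complex.sub_re, Complex.sub_im,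
      Complex.one_re, Complex.one_im, Complex.neg_re, Complex.neg_im, Complex.div_ofNat_re,
      Complex.div_ofNat_im]
    norm_num
    ring

lemma mukaiC_conjW_smulW_expB (hsymm : ∀ x y : V, b x y = b y x) (lam : ℂ) (B ω : V) :
    mukaiC b (smulW lam (expB b B ω)) (conjW (smulW lam (expB b B ω))) =
      ((2 * ‖lam‖ ^ 2 * b ω ω : ℝ) : ℂ) := by
  rw [conjW_smulW, conjW_expB, mukaiC_smulW_smulW, mukaiC_expB_expB b hsymm, Complex.mul_conj,
    Complex.normSq_eq_norm_sq, sub_self, sub_neg_eq_add, bC_self b hsymm]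
  apply Complex.ext <;> simp [← two_smul ℝ ω] <;> ring

end

theorem hyperKahler_structure_typeA_typeA_general
    {V : Type*} [AddCommGroup V] [Module ℝ V]
    (b : V →ₗ[ℝ] V →ₗ[ℝ] ℝ) (hsymm : ∀ x y : V, b x y = b y x)
    (lam lam' : ℂ) (hlam : lam ≠ 0) (hlam' : lam' ≠ 0)
    (ω ω' B' : V) :
    (PointwiseOrth b (smulW lam (expB b 0 ω)) (smulW lam' (expB b B' ω')) ∧
      mukaiC b (smulW lam (expB b 0 ω)) (conjW (smulW lam (expB b 0 ω)))
        = mukaiC b (smulW lam' (expB b B' ω')) (conjW (smulW lam' (expB b B' ω')))) ↔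
    (b ω ω' = 0 ∧ b ω B' = 0 ∧ b ω' B' = 0 ∧
      b B' B' = b ω ω + b ω' ω' ∧
      ‖lam‖ ^ 2 * b ω ω = ‖lam'‖ ^ 2 * b ω' ω') := by
  rw [mukaiC_conjW_smulW_expB b hsymm, mukaiC_conjW_smulW_expB b hsymm, Complex.ofReal_inj,
    pointwiseOrth_iff_mukaiC, conjW_smulW, conjW_expB, mukaiC_smulW_smulW, mukaiC_smulW_smulW,
    mukaiC_expB_expB b hsymm, mukaiC_expB_expB b hsymm]
  simp only [mul_eq_zero, hlam, hlam', map_eq_zero, false_or, neg_eq_zero, one_div, inv_eq_zero,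
    OfNat.ofNat_ne_zero, bC_self_eq_zero_iff b hsymm]
  simp only [zero_sub, sub_neg_eq_add, map_neg, map_sub, map_add, LinearMap.neg_apply,
    LinearMap.sub_apply, LinearMap.add_apply, hsymm ω' ω, hsymm B' ω, hsymm B' ω']
  constructor
  · rintro ⟨⟨⟨h₁, h₂⟩, h₃, h₄⟩, h₅⟩
    refine ⟨?_, ?_, ?_, ?_, ?_⟩ <;> linarith
  · rintro ⟨h₁, h₂, h₃, h₄, h₅⟩
    refine ⟨⟨⟨?_, ?_⟩, ?_, ?_⟩, ?_⟩ <;> linarith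

theorem hyperKahler_structure_typeA_typeA
    {V : Type*} [AddCommGroup V] [Module ℝ V]
    (b : V →ₗ[ℝ] V →ₗ[ℝ] ℝ) (hsymm : ∀ x y : V, b x y = b y x)
    (lam lam' : ℂ) (hlam : lam ≠ 0) (hlam' : lam' ≠ 0)
    (ω ω' B' : V) (hω : 0 < b ω ω) (hω' : 0 < b ω' ω') :
    (PointwiseOrth b (smulW lam (expB b 0 ω)) (smulW lam' (expB b B' ω')) ∧
      mukaiC b (smulW lam (expB b 0 ω)) (conjW (smulW lam (expB b 0 ω)))
        = mukaiC b (smulW lam' (expB b B' ω')) (conjW (smulW lam' (expB b B' ω')))) ↔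
    (b ω ω' = 0 ∧ b ω B' = 0 ∧ b ω' B' = 0 ∧
      b B' B' = b ω ω + b ω' ω' ∧
      ‖lam‖ ^ 2 * b ω ω = ‖lam'‖ ^ 2 * b ω' ω') :=
  hyperKahler_structure_typeA_typeA_general b hsymm lam lam' hlam hlam' ω ω' B'
end
end

section
/- (Sufficiency in the characterization of Kähler rigidity.) Let B, ω ∈ Λ_ℝ with b(ω,ω) > 0, and set Re φ = (1, B, ½(b(B,B) − b(ω,ω))) and Im φ = (0, ω, b(B,ω)) in M_ℝ. If B lies in the image of Λ_ℚ in Λ_ℝ, and ω = κ·H for some κ ∈ ℝ and H ∈ Λ, and b(ω,ω) ∈ ℚ, then there exists a ℤ-submodule L ⊆ M of rank 2 whose ℝ-span contains both Re φ and Im φ. -/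
noncomputable section

open Matrix in
/-- The ℝ-bilinear extension to `Λ_ℝ = ℝⁿ` of the integral symmetric bilinear form
on `Λ = ℤⁿ` with Gram matrix `G`. -/
def bR {n : ℕ} (G : Matrix (Fin n) (Fin n) ℤ) (x y : Fin n → ℝ) : ℝ :=
  x ⬝ᵥ (G.map (Int.cast : ℤ → ℝ)).mulVec y

/-- The canonical map `Λ = ℤⁿ → Λ_ℝ = ℝⁿ`. -/
def intCast {n : ℕ} (v : Fin n → ℤ) : Fin n → ℝ := fun i => (v i : ℝ)

/-- The Mukai lattice `M = ℤ × Λ × ℤ` viewed inside `M_ℝ = ℝ × Λ_ℝ × ℝ`. -/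
def Mset (n : ℕ) : Set (ℝ × (Fin n → ℝ) × ℝ) :=
  {w | ∃ (a c : ℤ) (x : Fin n → ℤ), w = ((a : ℝ), intCast x, (c : ℝ))}
/-!
`Re φ` is a rational point of `M_ℝ`, and `Im φ = κ · (0, H, b(B,H))` is a real multiple of one.
Clearing denominators puts a nonzero integral multiple of each of the two rational points in `M`;
these two lattice vectors are independent because only the first has a nonzero first coordinate
and `Im φ ≠ 0` (as `b(ω,ω) > 0`), so they span the required rank-2 lattice.
-/

open Matrix Module Submodule

lemma linearIndependent_pair_of_fst {K V : Type*} [Field K] [AddCommGroup V] [Module K V]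
    {x y : K × V} (hx : x.1 ≠ 0) (hy₁ : y.1 = 0) (hy : y ≠ 0) :
    LinearIndependent K ![x, y] := by
  refine LinearIndependent.pair_iff.mpr fun s t hst => ?_
  have hs : s = 0 := by
    have h₁ := congrArg Prod.fst hst
    simp only [Prod.fst_add, Prod.smul_fst, hy₁, smul_eq_mul, mul_zero, add_zero,
      Prod.fst_zero] at h₁
    exact (mul_eq_zero.mp h₁).resolve_right hx
  subst hs
  rw [zero_smul, zero_add, smul_eq_zero] at hst
  exact ⟨rfl, hst.resolve_right hy⟩

lemma mem_span_of_zsmul_mem {K V : Type*} [Field K] [CharZero K] [AddCommGroup V] [Module K V]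
    {L : Submodule ℤ V} {c : ℤ} {v : V} (hc : c ≠ 0) (h : c • v ∈ L) :
    v ∈ span K (L : Set V) := by
  have hcK : (c : K) ≠ 0 := Int.cast_ne_zero.mpr hc
  have hv := smul_mem _ (c : K)⁻¹ (subset_span (R := K) h)
  rwa [← Int.cast_smul_eq_zsmul K c v, smul_smul, inv_mul_cancel₀ hcK, one_smul] at hv

lemma exists_finrank_eq_two_of_zsmul_mem {K V : Type*} [Field K] [CharZero K] [AddCommGroup V]
    [Module K V] (M : Submodule ℤ V) {x y : V} (hx : ∃ d : ℤ, d ≠ 0 ∧ d • x ∈ M)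
    (hy : ∃ d : ℤ, d ≠ 0 ∧ d • y ∈ M) (hxy : LinearIndependent K ![x, y]) :
    ∃ L : Submodule ℤ V, L ≤ M ∧ finrank ℤ L = 2 ∧
      x ∈ span K (L : Set V) ∧ y ∈ span K (L : Set V) := by
  obtain ⟨d, hd, hdx⟩ := hx
  obtain ⟨e, he, hey⟩ := hy
  have hli : LinearIndependent ℤ ![d • x, e • y] := by
    refine LinearIndependent.restrict_scalars' (K := K) ℤ
      (LinearIndependent.pair_iff.mpr fun s t hst => ?_)
    rw [← Int.cast_smul_eq_zsmul K, ← Int.cast_smul_eq_zsmul K, smul_smul, smul_smul] at hst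
    obtain ⟨hs, ht⟩ := LinearIndependent.pair_iff.mp hxy _ _ hst
    exact ⟨(mul_eq_zero.mp hs).resolve_right (Int.cast_ne_zero.mpr hd),
      (mul_eq_zero.mp ht).resolve_right (Int.cast_ne_zero.mpr he)⟩
  refine ⟨span ℤ (Set.range ![d • x, e • y]), ?_, ?_, mem_span_of_zsmul_mem hd ?_,
    mem_span_of_zsmul_mem he ?_⟩
  · rw [span_le, Set.range_subset_iff, Fin.forall_fin_two]
    exact ⟨hdx, hey⟩
  · simpa using finrank_span_eq_card hli
  · exact subset_span ⟨0, rfl⟩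
  · exact subset_span ⟨1, rfl⟩

lemma exists_int_eq_mul_of_finite {ι : Type*} [Finite ι] (q : ι → ℚ) :
    ∃ d : ℤ, d ≠ 0 ∧ ∀ i, ∃ z : ℤ, (z : ℚ) = d * q i := by
  obtain ⟨⟨d, hd⟩, h⟩ := IsLocalization.exist_integer_multiples_of_finite (nonZeroDivisors ℤ) q
  refine ⟨d, nonZeroDivisors.ne_zero hd, fun i => ?_⟩
  obtain ⟨z, hz⟩ := h i
  exact ⟨z, by simpa [zsmul_eq_mul] using hz⟩

def bQ {n : ℕ} (G : Matrix (Fin n) (Fin n) ℤ) (x y : Fin n → ℚ) : ℚ :=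
  x ⬝ᵥ (G.map (Int.cast : ℤ → ℚ)).mulVec y

lemma bR_ratCast {n : ℕ} (G : Matrix (Fin n) (Fin n) ℤ) (x y : Fin n → ℚ) :
    bR G (fun i => (x i : ℝ)) (fun i => (y i : ℝ)) = (bQ G x y : ℝ) := by
  simp only [bR, bQ, dotProduct, mulVec, map_apply]
  push_cast
  rfl

lemma bR_smul_right {n : ℕ} (G : Matrix (Fin n) (Fin n) ℤ) (x y : Fin n → ℝ) (c : ℝ) :
    bR G x (c • y) = c * bR G x y := by
  rw [bR, mulVec_smul, dotProduct_smul, smul_eq_mul, bR]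

def mukaiLattice (n : ℕ) : Submodule ℤ (ℝ × (Fin n → ℝ) × ℝ) where
  carrier := Mset n
  zero_mem' := ⟨0, 0, 0, by simp [Prod.ext_iff, funext_iff, intCast]⟩
  add_mem' := by
    rintro _ _ ⟨a, c, x, rfl⟩ ⟨a', c', x', rfl⟩
    exact ⟨a + a', c + c', x + x', by simp [Prod.ext_iff, funext_iff, intCast]⟩
  smul_mem' := by
    rintro d _ ⟨a, c, x, rfl⟩
    exact ⟨d * a, d * c, d • x, by simp [Prod.ext_iff, funext_iff, intCast]⟩

def mukaiRatCast {n : ℕ} (a : ℚ) (x : Fin n → ℚ) (c : ℚ) : ℝ × (Fin n → ℝ) × ℝ :=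
  ((a : ℝ), fun i => (x i : ℝ), (c : ℝ))

lemma exists_zsmul_mukaiRatCast_mem {n : ℕ} (a : ℚ) (x : Fin n → ℚ) (c : ℚ) :
    ∃ d : ℤ, d ≠ 0 ∧ d • mukaiRatCast a x c ∈ mukaiLattice n := by
  obtain ⟨d, hd, h⟩ := exists_int_eq_mul_of_finite (Sum.elim ![a, c] x)
  obtain ⟨za, hza⟩ : ∃ z : ℤ, (z : ℚ) = d * a := h (.inl 0)
  obtain ⟨zc, hzc⟩ : ∃ z : ℤ, (z : ℚ) = d * c := h (.inl 1)
  choose zx hzx using fun i => (h (.inr i) : ∃ z : ℤ, (z : ℚ) = d * x i)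
  refine ⟨d, hd, za, zc, zx, ?_⟩
  simp only [mukaiRatCast, Prod.ext_iff, funext_iff, Prod.smul_fst, Prod.smul_snd, Pi.smul_apply,
    intCast, ← Int.cast_smul_eq_zsmul ℝ, smul_eq_mul]
  exact ⟨by exact_mod_cast hza.symm, fun i => by exact_mod_cast (hzx i).symm,
    by exact_mod_cast hzc.symm⟩

theorem kahler_rigid_sufficiency_general
    {n : ℕ} (G : Matrix (Fin n) (Fin n) ℤ)
    (B ω : Fin n → ℝ) (hω : 0 < bR G ω ω)
    (hB : ∃ q : Fin n → ℚ, B = fun i => (q i : ℝ))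
    (hωH : ∃ (κ : ℝ) (H : Fin n → ℤ), ω = κ • intCast H)
    (hωω : ∃ q : ℚ, bR G ω ω = (q : ℝ)) :
    ∃ L : Submodule ℤ (ℝ × (Fin n → ℝ) × ℝ),
      (L : Set (ℝ × (Fin n → ℝ) × ℝ)) ⊆ Mset n ∧
      Module.finrank ℤ L = 2 ∧
      ((1 : ℝ), B, (bR G B B - bR G ω ω) / 2)
        ∈ Submodule.span ℝ (L : Set (ℝ × (Fin n → ℝ) × ℝ)) ∧
      ((0 : ℝ), ω, bR G B ω)
        ∈ Submodule.span ℝ (L : Set (ℝ × (Fin n → ℝ) × ℝ)) := by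
  obtain ⟨q, hBq⟩ := hB
  obtain ⟨κ, H, hωκ⟩ := hωH
  obtain ⟨s, hs⟩ := hωω
  have hH : intCast H = fun i => ((H i : ℚ) : ℝ) := by
    funext i
    rw [intCast, Rat.cast_intCast]
  set P := mukaiRatCast 1 q ((bQ G q q - s) / 2)
  set Q := mukaiRatCast 0 (fun i => (H i : ℚ)) (bQ G q fun i => (H i : ℚ))
  have hRe : ((1 : ℝ), B, (bR G B B - bR G ω ω) / 2) = P := by
    simp only [P, mukaiRatCast, hBq, bR_ratCast, hs]
    push_cast
    rfl
  have hIm : ((0 : ℝ), ω, bR G B ω) = κ • Q := by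
    simp only [Q, mukaiRatCast, hBq, hωκ, bR_smul_right, hH, bR_ratCast]
    rw [Prod.smul_mk, Prod.smul_mk, Rat.cast_zero, smul_zero, smul_eq_mul]
  have hQ : Q ≠ 0 := by
    intro hQ₀
    have hH₀ : intCast H = 0 := hH.trans (congrArg (·.2.1) hQ₀)
    simp [hωκ, hH₀, bR] at hω
  obtain ⟨L, hLM, hL2, hPL, hQL⟩ := exists_finrank_eq_two_of_zsmul_mem (mukaiLattice n)
    (exists_zsmul_mukaiRatCast_mem _ _ _) (exists_zsmul_mukaiRatCast_mem _ _ _)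
    (linearIndependent_pair_of_fst (x := P) (by simp [P, mukaiRatCast]) Rat.cast_zero hQ)
  exact ⟨L, hLM, hL2, hRe ▸ hPL, hIm ▸ smul_mem _ κ hQL⟩

theorem kahler_rigid_sufficiency
    {n : ℕ} (G : Matrix (Fin n) (Fin n) ℤ) (hG : G.IsSymm)
    (B ω : Fin n → ℝ) (hω : 0 < bR G ω ω)
    (hB : ∃ q : Fin n → ℚ, B = fun i => (q i : ℝ))
    (hωH : ∃ (κ : ℝ) (H : Fin n → ℤ), ω = κ • intCast H)
    (hωω : ∃ q : ℚ, bR G ω ω = (q : ℝ)) :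
    ∃ L : Submodule ℤ (ℝ × (Fin n → ℝ) × ℝ),
      (L : Set (ℝ × (Fin n → ℝ) × ℝ)) ⊆ Mset n ∧
      Module.finrank ℤ L = 2 ∧
      ((1 : ℝ), B, (bR G B B - bR G ω ω) / 2)
        ∈ Submodule.span ℝ (L : Set (ℝ × (Fin n → ℝ) × ℝ)) ∧
      ((0 : ℝ), ω, bR G B ω)
        ∈ Submodule.span ℝ (L : Set (ℝ × (Fin n → ℝ) × ℝ)) :=
  kahler_rigid_sufficiency_general G B ω hω hB hωH hωω
end
end
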